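/- Let X be a complete, locally compact metric tree, let ν₋, ν₊ be antipodal probability measures on ∂X, and let μ be any Borel probability measure on the set of complete unit-speed geodesics of X with ends ν₋ and ν₊. Then for every oriented edge (xy) of X one has φ(xy) = μ(xy) − μ(yx), where μ(xy) (resp. μ(yx)) is the μ-measure of the geodesics traversing the edge from x to y (resp. from y to x) and φ(xy) is the flow defined by (ν₋,ν₊). Moreover, for every vertex x one has μ(x) ≥ φ(x), where μ(x) is the μ-measure of the set of geodesics passing through x and φ(x) is the flow through x. -/

import Mathlib

/-!
In a 0-hyperbolic geodesic space `dist p (g t) - t` is eventually constant along a ray `g`;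
its limit `b_g p` is the Busemann function, and
`dist p (g t) = max (dist p (g 0) - t) (b_g p + t)`. Asymptotic rays have Busemann functions
differing by a constant, so everything about a boundary point `ξ` is read off from `b_g`:
`ξ ∈ (xy)₊` iff `b_g y = b_g x - dist x y`, and `ξ` lies in the direction of `z` at `x` iff
the Gromov product `(z | ξ)_x` is positive.

For a line `γ` with Busemann functions `A` and `B` at its two ends,
`dist p (γ t) = (A p + B p) / 2 + |t - (A p - B p) / 2|`. So `p` lies on `γ` iff
`A p + B p = 0`; otherwise the foot of `p` on `γ` is a branch point, and both ends of `γ` lie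
in its direction at `p`. On an edge `(xy)` no branch point lies strictly between `x` and `y`,
hence `γ` traverses `(xy)` iff `e₊∞ γ ∈ (xy)₊` and `e₋∞ γ ∉ (xy)₊`, and
`φ(xy) = μ(xy) - μ(yx)` is inclusion–exclusion. At a vertex `x`, the flow into a direction `C`
is at most the measure of the lines with `e₊∞` in `C` and `e₋∞` outside `C`; these lines pass
through `x` and form disjoint sets for distinct `C`.
-/

open MeasureTheory Metric Set
open scoped ENNReal NNReal

noncomputable section

variable {X : Type*} [MetricSpace X]

/-- A metric space is *geodesic* if any two points are joined by an isometrically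
parametrized path. -/
def IsGeodesicSpace (X : Type*) [MetricSpace X] : Prop :=
  ∀ x y : X, ∃ γ : ℝ → X, γ 0 = x ∧ γ (dist x y) = y ∧
    ∀ s ∈ Set.Icc (0 : ℝ) (dist x y), ∀ t ∈ Set.Icc (0 : ℝ) (dist x y),
      dist (γ s) (γ t) = |s - t|

/-- Zero-hyperbolicity (four point condition): the metric formulation of the fact
that all geodesic triangles are degenerate.  A complete geodesic zero-hyperbolic
space is a metric tree. -/
def IsZeroHyperbolic (X : Type*) [MetricSpace X] : Prop :=
  ∀ x y z w : X, dist x y + dist z w ≤ max (dist x z + dist y w) (dist x w + dist y z)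

/-- A unit-speed geodesic ray (only the behaviour for `t ≥ 0` matters). -/
def IsRay (γ : ℝ → X) : Prop :=
  ∀ s t : ℝ, 0 ≤ s → 0 ≤ t → dist (γ s) (γ t) = |s - t|

/-- The type of unit-speed geodesic rays of `X`. -/
def GeodesicRay (X : Type*) [MetricSpace X] : Type _ := {γ : ℝ → X // IsRay γ}

instance : TopologicalSpace (GeodesicRay X) :=
  inferInstanceAs (TopologicalSpace {γ : ℝ → X // IsRay γ})

/-- Two rays are asymptotic when they stay at bounded distance from one another. -/
def Asymptotic (γ β : GeodesicRay X) : Prop :=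
  ∃ C : ℝ, ∀ t : ℝ, 0 ≤ t → dist (γ.1 t) (β.1 t) ≤ C

/-- Asymptoty is an equivalence relation on rays. -/
def raySetoid (X : Type*) [MetricSpace X] : Setoid (GeodesicRay X) where
  r := Asymptotic
  iseqv := by
    refine ⟨fun γ => ⟨0, fun t _ => by simp⟩, ?_, ?_⟩
    · rintro γ β ⟨C, hC⟩
      exact ⟨C, fun t ht => by rw [dist_comm]; exact hC t ht⟩
    · rintro γ β δ ⟨C₁, h₁⟩ ⟨C₂, h₂⟩
      exact ⟨C₁ + C₂, fun t ht => (dist_triangle _ _ _).trans (add_le_add (h₁ t ht) (h₂ t ht))⟩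

/-- The geodesic boundary of `X`: asymptote classes of unit-speed geodesic rays. -/
def Boundary (X : Type*) [MetricSpace X] : Type _ := Quotient (raySetoid X)

/-- The class of a ray in the boundary. -/
def boundaryMk (γ : GeodesicRay X) : Boundary X := Quotient.mk (raySetoid X) γ

instance : TopologicalSpace (Boundary X) :=
  inferInstanceAs (TopologicalSpace (Quotient (raySetoid X)))

instance : MeasurableSpace (Boundary X) := borel _

instance : BorelSpace (Boundary X) := ⟨rfl⟩

/-- The type of complete unit-speed geodesics (geodesic lines) of `X`. -/
def GeodesicLine (X : Type*) [MetricSpace X] : Type _ := {γ : ℝ → X // Isometry γ}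

instance : TopologicalSpace (GeodesicLine X) :=
  inferInstanceAs (TopologicalSpace {γ : ℝ → X // Isometry γ})

instance : MeasurableSpace (GeodesicLine X) := borel _

instance : BorelSpace (GeodesicLine X) := ⟨rfl⟩

/-- Evaluation of a geodesic line at time `t`. -/
def eval (t : ℝ) (γ : GeodesicLine X) : X := γ.1 t

/-- The positive-time ray of a geodesic line. -/
def posRay (γ : GeodesicLine X) : GeodesicRay X :=
  ⟨fun t => γ.1 t, fun s t _ _ => by rw [γ.2.dist_eq, Real.dist_eq]⟩

/-- The negative-time ray of a geodesic line. -/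
def negRay (γ : GeodesicLine X) : GeodesicRay X :=
  ⟨fun t => γ.1 (-t), fun s t _ _ => by
    rw [γ.2.dist_eq, Real.dist_eq, neg_sub_neg, abs_sub_comm]⟩

/-- The end at `+∞` of a geodesic line (`e₊∞`). -/
def endTop (γ : GeodesicLine X) : Boundary X := boundaryMk (posRay γ)

/-- The end at `-∞` of a geodesic line (`e₋∞`). -/
def endBot (γ : GeodesicLine X) : Boundary X := boundaryMk (negRay γ)


/-- `P` is a coupling of `μ` and `ν`. -/
def IsCoupling {Y Z : Type*} [MeasurableSpace Y] [MeasurableSpace Z]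
    (μ : Measure Y) (ν : Measure Z) (P : Measure (Y × Z)) : Prop :=
  IsProbabilityMeasure P ∧ P.map Prod.fst = μ ∧ P.map Prod.snd = ν

/-- The support of a Borel measure: points all of whose open neighbourhoods have
positive measure. -/
def msupport {Y : Type*} [TopologicalSpace Y] [MeasurableSpace Y] (μ : Measure Y) : Set Y :=
  {y | ∀ U : Set Y, IsOpen U → y ∈ U → μ U ≠ 0}

variable {X : Type*} [MetricSpace X] [MeasurableSpace X]

/-- Finite second moment with respect to the base point `x₀`. -/
def FiniteSecondMoment (x₀ : X) (μ : Measure X) : Prop :=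
  ∫⁻ x, edist x x₀ ^ 2 ∂μ < ⊤

/-- The squared quadratic Wasserstein "distance" (possibly infinite) between two
measures on `X`. -/
def W2sq (μ ν : Measure X) : ℝ≥0∞ :=
  ⨅ (P : Measure (X × X)) (_ : IsCoupling μ ν P), ∫⁻ p, edist p.1 p.2 ^ 2 ∂P


/-- `AntipodalMeasures νneg νpos`: the two measures are concentrated on disjoint Borel
sets (the antipodality condition for measures on the boundary of a tree). -/
def AntipodalMeasures {X : Type*} [MetricSpace X]
    (νneg νpos : MeasureTheory.Measure (Boundary X)) : Prop :=
  ∃ A B : Set (Boundary X), MeasurableSet A ∧ MeasurableSet B ∧ Disjoint A B ∧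
    νneg Aᶜ = 0 ∧ νpos Bᶜ = 0

variable {X : Type*} [MetricSpace X]

/-- The squared "distance from `x₀` to the geodesic line with ends `ξ` and `ζ`"
`D₀(ξ,ζ)²` (the squared Gromov product), as an extended nonnegative real.  If no
such line exists — in a tree, exactly when `ξ = ζ` — the infimum over the empty
set gives the value `∞`, in accordance with the convention `D₀(ξ,ξ) = ∞`. -/
def D0sq (x₀ : X) (ξ ζ : Boundary X) : ℝ≥0∞ :=
  ⨅ (γ : GeodesicLine X) (_ : endBot γ = ξ ∧ endTop γ = ζ),
    ENNReal.ofReal (Metric.infDist x₀ (Set.range γ.1)) ^ 2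

/-- Minus the squared Gromov product, as a cost function with values in `[-∞, 0]`. -/
def negD0sq (x₀ : X) (ξ ζ : Boundary X) : EReal := -((D0sq x₀ ξ ζ : ℝ≥0∞) : EReal)

/-- A dynamical transport plan `μ` (a measure on geodesic lines) is a displacement
interpolation of a complete unit-speed geodesic of the Wasserstein space `W₂(X)`:
all its time-`t` marginals lie in `W₂(X)` and they form a unit-speed geodesic. -/
def IsDisplacementGeodesic [MeasurableSpace X] (x₀ : X)
    (μ : MeasureTheory.Measure (GeodesicLine X)) : Prop :=
  MeasureTheory.IsProbabilityMeasure μ ∧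
  (∀ t : ℝ, FiniteSecondMoment x₀ (μ.map (eval t))) ∧
  ∀ s t : ℝ, W2sq (μ.map (eval s)) (μ.map (eval t)) = ENNReal.ofReal ((s - t) ^ 2)

/-- Two complete geodesics are antagonist if one of them goes through two distinct
points `x, y` in this order while the other goes through them in the reverse order. -/
def Antagonist (γ β : GeodesicLine X) : Prop :=
  ∃ x y : X, x ≠ y ∧ ∃ t u v w : ℝ, t < u ∧ v < w ∧
    γ.1 t = x ∧ γ.1 u = y ∧ β.1 v = y ∧ β.1 w = x

/-- `γ` traverses the edge from `x` to `y` (in this orientation). -/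
def Traverses (γ : GeodesicLine X) (x y : X) : Prop :=
  ∃ t : ℝ, γ.1 t = x ∧ γ.1 (t + dist x y) = y

/-- The closest point of the geodesic line `γ` to `x₀` is `x`. -/
def ClosestAt (x₀ : X) (γ : GeodesicLine X) (x : X) : Prop :=
  (∃ t : ℝ, γ.1 t = x) ∧ ∀ t : ℝ, dist x₀ x ≤ dist x₀ (γ.1 t)

/-- A set `S ⊆ Y × Y` is cyclically monotone for the cost `c`. -/
def CyclicallyMonotone {Y : Type*} (c : Y → Y → ℝ) (S : Set (Y × Y)) : Prop :=
  ∀ (n : ℕ) (p : Fin n → Y × Y), (∀ i, p i ∈ S) → ∀ σ : Equiv.Perm (Fin n),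
    ∑ i, c (p i).1 (p i).2 ≤ ∑ i, c (p i).1 (p (σ i)).2

/-- Cyclical monotonicity for a cost with values in the extended reals. -/
def CyclicallyMonotoneE {Y : Type*} (c : Y → Y → EReal) (S : Set (Y × Y)) : Prop :=
  ∀ (n : ℕ) (p : Fin n → Y × Y), (∀ i, p i ∈ S) → ∀ σ : Equiv.Perm (Fin n),
    ∑ i, c (p i).1 (p i).2 ≤ ∑ i, c (p i).1 (p (σ i)).2

/-- The connected components of the complement of a point (the "directions" at `x`:
edges of the tree emanating from `x`, when `x` is a vertex). -/
def complComponents (x : X) : Set (Set X) :=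
  {C | ∃ y, y ≠ x ∧ C = connectedComponentIn ({x}ᶜ) y}

/-- `x` is a vertex of the tree `X`: the complement of `x` does not have exactly
two connected components (interior points of edges have exactly two). -/
def IsVertex (x : X) : Prop := (complComponents x).ncard ≠ 2

/-- `(x, y)` is an oriented edge: `x ≠ y` are vertices and no vertex lies strictly
between them. -/
def IsOrientedEdge (x y : X) : Prop :=
  x ≠ y ∧ IsVertex x ∧ IsVertex y ∧
    ∀ z : X, dist x z + dist z y = dist x y → z = x ∨ z = y ∨ ¬ IsVertex z

/-- The set of boundary points lying in the direction of the set `C` as seen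
from `x`: classes of rays starting at `x` that immediately enter `C`. -/
def dirBoundary (x : X) (C : Set X) : Set (Boundary X) :=
  {ξ | ∃ γ : GeodesicRay X, γ.1 0 = x ∧ boundaryMk γ = ξ ∧ ∀ t : ℝ, 0 < t → γ.1 t ∈ C}

/-- The *future* `(xy)₊` of the oriented edge `(x, y)`: boundary points `ξ` such
that the ray from `x` to `ξ` passes through `y`, i.e. the boundary points of the
component of the complement of the open edge containing `y`. -/
def future (x y : X) : Set (Boundary X) :=
  {ξ | ∃ γ : GeodesicRay X, γ.1 0 = x ∧ boundaryMk γ = ξ ∧ γ.1 (dist x y) = y}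

/-- The value of the signed measure `ν = νpos - νneg` on a set of boundary points. -/
def signedFlow (νneg νpos : MeasureTheory.Measure (Boundary X)) (A : Set (Boundary X)) : ℝ :=
  (νpos A).toReal - (νneg A).toReal

/-- The flow `φ(xy) = ν((xy)₊)` through the oriented edge `(x, y)`. -/
def edgeFlow (νneg νpos : MeasureTheory.Measure (Boundary X)) (x y : X) : ℝ :=
  signedFlow νneg νpos (future x y)

/-- The flow `φ(x)` through the point `x`: the sum, over the directions at `x`
carrying a positive flow, of these flows (outflow = inflow). -/
def vertexFlow (νneg νpos : MeasureTheory.Measure (Boundary X)) (x : X) : ℝ :=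
  ∑' C : complComponents x, max (signedFlow νneg νpos (dirBoundary x C.1)) 0

/-- The flow at `x` in the direction of the base point `x₀` (the flow through the
edge at `x` along which the distance to `x₀` decreases), signed as going out of `x`. -/
def towardFlow (νneg νpos : MeasureTheory.Measure (Boundary X)) (x₀ x : X) : ℝ :=
  signedFlow νneg νpos (dirBoundary x (connectedComponentIn ({x}ᶜ) x₀))

open Classical in
/-- The specific flow `φ⁰(x)`: for `x ≠ x₀`, the flow `φ(x)` minus the contribution
of the edge at `x` pointing toward `x₀` when that edge is positive (where it is
removed from the sum of outgoing positive flows) or negative (where it is removed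
from the equal sum of incoming flows) — in both cases its absolute value is
subtracted — and `φ⁰(x₀) = φ(x₀)`. -/
def specificFlow (νneg νpos : MeasureTheory.Measure (Boundary X)) (x₀ x : X) : ℝ :=
  if x = x₀ then vertexFlow νneg νpos x
  else vertexFlow νneg νpos x - |towardFlow νneg νpos x₀ x|


end

noncomputable section

variable {X : Type*} [MetricSpace X]

def gromovProduct (p u v : X) : ℝ := (dist p u + dist p v - dist u v) / 2

theorem gromovProduct_comm (p u v : X) : gromovProduct p u v = gromovProduct p v u := by
  simp only [gromovProduct, dist_comm u v, add_comm (dist p u)]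

theorem continuous_gromovProduct (p u : X) : Continuous (gromovProduct p u) := by
  unfold gromovProduct; fun_prop

theorem gromovProduct_le_of_dist_add_dist_eq {p u v c : X}
    (hc : dist u c + dist c v = dist u v) : gromovProduct p u v ≤ gromovProduct p u c := by
  unfold gromovProduct; linarith [dist_triangle p c v]

theorem IsZeroHyperbolic.min_le_gromovProduct (htree : IsZeroHyperbolic X) (p u v w : X) :
    min (gromovProduct p u v) (gromovProduct p v w) ≤ gromovProduct p u w := by
  have h := htree u w p v
  simp only [gromovProduct, dist_comm u p, dist_comm w p, dist_comm w v] at h ⊢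
  rcases le_max_iff.1 h with h | h
  · exact (min_le_right _ _).trans (by linarith)
  · exact (min_le_left _ _).trans (by linarith)

theorem IsGeodesicSpace.exists_isPreconnected_between (hgeo : IsGeodesicSpace X) (u v : X) :
    ∃ S : Set X, IsPreconnected S ∧ u ∈ S ∧ v ∈ S ∧
      ∀ c ∈ S, dist u c + dist c v = dist u v := by
  obtain ⟨γ, hγu, hγv, hγ⟩ := hgeo u v
  have hD : dist u v ∈ Icc 0 (dist u v) := ⟨dist_nonneg, le_rfl⟩
  have h0 : (0 : ℝ) ∈ Icc 0 (dist u v) := ⟨le_rfl, dist_nonneg⟩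
  have hlip : LipschitzOnWith 1 γ (Icc 0 (dist u v)) :=
    .of_dist_le_mul fun s hs t ht => by simp [hγ s hs t ht, Real.dist_eq]
  refine ⟨γ '' Icc 0 (dist u v), isPreconnected_Icc.image _ hlip.continuousOn,
    ⟨0, h0, hγu⟩, ⟨_, hD, hγv⟩, ?_⟩
  rintro _ ⟨s, hs, rfl⟩
  rw [← hγu, ← hγv, hγ 0 h0 s hs, hγ s hs _ hD, hγu, hγv,
    abs_of_nonpos (by linarith [hs.1]), abs_of_nonpos (by linarith [hs.2])]
  ring

theorem IsZeroHyperbolic.connectedComponentIn_compl_singleton (htree : IsZeroHyperbolic X)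
    (hgeo : IsGeodesicSpace X) {p z : X} (hz : z ≠ p) :
    connectedComponentIn {p}ᶜ z = {w | 0 < gromovProduct p z w} := by
  have hpos : ∀ {w : X}, w ≠ p → 0 < gromovProduct p w w := fun hw => by
    simpa [gromovProduct] using dist_pos.2 hw.symm
  have hne : ∀ {u w : X}, 0 < gromovProduct p u w → w ≠ p := by
    rintro u w hw rfl
    simp [gromovProduct, dist_comm] at hw
  have hzz : z ∈ {w | 0 < gromovProduct p z w} := hpos hz
  apply subset_antisymm
  · have hrest : IsOpen {w | w ≠ p ∧ gromovProduct p z w ≤ 0} := by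
      refine isOpen_iff_forall_mem_open.2 fun w ⟨hwp, hzw⟩ =>
        ⟨{w' | 0 < gromovProduct p w w'}, fun w' hw' => ⟨hne hw', not_lt.1 fun hzw' => ?_⟩,
        isOpen_lt continuous_const (continuous_gromovProduct p w), hpos hwp⟩
      have := htree.min_le_gromovProduct p z w' w
      rw [gromovProduct_comm p w'] at this
      exact not_lt.2 hzw (lt_min hzw' hw' |>.trans_le this)
    refine isPreconnected_connectedComponentIn.subset_left_of_subset_union
      (isOpen_lt continuous_const (continuous_gromovProduct p z)) hrest
      (disjoint_left.2 fun w hw hw' => not_lt.2 hw'.2 hw) (fun w hw => ?_)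
      ⟨z, mem_connectedComponentIn (by simpa using hz), hzz⟩
    have hwp : w ≠ p := by simpa using connectedComponentIn_subset _ _ hw
    exact (lt_or_ge 0 (gromovProduct p z w)).imp id (⟨hwp, ·⟩)
  · refine (isPreconnected_of_forall z fun w hw => ?_).subset_connectedComponentIn
      hzz fun w hw => hne hw
    obtain ⟨S, hS, hzS, hwS, hSw⟩ := hgeo.exists_isPreconnected_between z w
    exact ⟨S, fun c hc => hw.trans_le (gromovProduct_le_of_dist_add_dist_eq (hSw c hc)), hzS,
      hwS, hS⟩

theorem IsZeroHyperbolic.isVertex_of_between (htree : IsZeroHyperbolic X)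
    (hgeo : IsGeodesicSpace X) {p u v w : X} (hu : u ≠ p) (hv : v ≠ p) (hw : w ≠ p)
    (huv : dist u p + dist p v = dist u v) (huw : dist u p + dist p w = dist u w)
    (hvw : dist v p + dist p w = dist v w) : IsVertex p := by
  have hsep : ∀ {a b : X}, a ≠ p → b ≠ p → dist a p + dist p b = dist a b →
      connectedComponentIn {p}ᶜ a ≠ connectedComponentIn {p}ᶜ b := by
    intro a b ha hb hab heq
    have hb' : b ∈ connectedComponentIn {p}ᶜ a := heq ▸ mem_connectedComponentIn (by simpa)
    rw [htree.connectedComponentIn_compl_singleton hgeo ha] at hb'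
    simp only [gromovProduct, mem_ofPred_eq, dist_comm p a] at hb'
    linarith
  intro h2
  by_cases hfin : (complComponents p).Finite
  · exact lt_irrefl 2 (h2 ▸ (two_lt_ncard_iff hfin).2 ⟨_, _, _, ⟨u, hu, rfl⟩,
      ⟨v, hv, rfl⟩, ⟨w, hw, rfl⟩, hsep hu hv huv, hsep hu hw huw, hsep hv hw hvw⟩)
  · simp [Set.Infinite.ncard hfin] at h2

-- The Busemann function of `g`: in a 0-hyperbolic space `dist p (g t) - t` is constant for
-- `t ≥ dist p (g 0)`.
def busemann (g : ℝ → X) (p : X) : ℝ := dist p (g (dist p (g 0))) - dist p (g 0)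

section Ray

variable {g : ℝ → X}

theorem IsRay.dist_sub_le (hg : IsRay g) (p : X) {t T : ℝ} (ht : 0 ≤ t) (htT : t ≤ T) :
    dist p (g T) - T ≤ dist p (g t) - t := by
  have := dist_triangle p (g t) (g T)
  rw [hg t T ht (ht.trans htT), abs_of_nonpos (by linarith)] at this
  linarith

theorem IsRay.busemann_apply_self (hg : IsRay g) {s : ℝ} (hs : 0 ≤ s) :
    busemann g (g s) = -s := by
  simp [busemann, hg s 0 hs le_rfl, abs_of_nonneg hs]

theorem IsZeroHyperbolic.dist_ray_add_le (htree : IsZeroHyperbolic X) (hg : IsRay g) (p : X)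
    {t T : ℝ} (ht : 0 ≤ t) (htT : t ≤ T) :
    dist p (g t) + T ≤ max (dist p (g 0) + (T - t)) (dist p (g T) + t) := by
  have h := htree p (g t) (g 0) (g T)
  rw [hg 0 T le_rfl (ht.trans htT), hg t T ht (ht.trans htT), hg t 0 ht le_rfl,
    abs_of_nonpos (by linarith), abs_of_nonpos (by linarith), abs_of_nonneg (by linarith),
    neg_sub, neg_sub] at h
  simpa only [sub_zero] using h

theorem IsZeroHyperbolic.dist_ray_eq_busemann_add (htree : IsZeroHyperbolic X) (hg : IsRay g)
    {p : X} {T : ℝ} (hT : dist p (g 0) ≤ T) : dist p (g T) = busemann g p + T := by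
  have hr := dist_nonneg (x := p) (y := g 0)
  have h := htree.dist_ray_add_le hg p hr hT
  have hmono := hg.dist_sub_le p hr hT
  have htri := dist_triangle_left (g (dist p (g 0))) (g T) p
  rw [hg _ T hr (hr.trans hT), abs_of_nonpos (by linarith)] at htri
  unfold busemann
  rcases le_max_iff.1 h with h | h <;> linarith [dist_nonneg (x := p) (y := g (dist p (g 0)))]

theorem IsZeroHyperbolic.dist_ray_eq_max (htree : IsZeroHyperbolic X) (hg : IsRay g) (p : X)
    {t : ℝ} (ht : 0 ≤ t) : dist p (g t) = max (dist p (g 0) - t) (busemann g p + t) := by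
  have hT := htree.dist_ray_eq_busemann_add hg (le_max_right t (dist p (g 0)))
  have htT := le_max_left t (dist p (g 0))
  have h := htree.dist_ray_add_le hg p ht htT
  have htri := dist_triangle p (g t) (g 0)
  rw [hg t 0 ht le_rfl, sub_zero, abs_of_nonneg ht] at htri
  refine le_antisymm ?_ (max_le (by linarith) (by linarith [hg.dist_sub_le p ht htT]))
  rw [hT] at h
  rcases le_max_iff.1 h with h | h
  · exact le_max_of_le_left (by linarith)
  · exact le_max_of_le_right (by linarith)

theorem IsZeroHyperbolic.busemann_sub_le (htree : IsZeroHyperbolic X) (hg : IsRay g) (p q : X) :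
    busemann g p - busemann g q ≤ dist p q := by
  have := dist_triangle p q (g (max (dist p (g 0)) (dist q (g 0))))
  rw [htree.dist_ray_eq_busemann_add hg (le_max_left _ _),
    htree.dist_ray_eq_busemann_add hg (le_max_right _ _)] at this
  linarith

theorem IsZeroHyperbolic.two_mul_gromovProduct_ray (htree : IsZeroHyperbolic X) (hg : IsRay g)
    {p z : X} {T : ℝ} (hp : dist p (g 0) ≤ T) (hz : dist z (g 0) ≤ T) :
    2 * gromovProduct p z (g T) = dist p z + busemann g p - busemann g z := by
  rw [gromovProduct, htree.dist_ray_eq_busemann_add hg hp, htree.dist_ray_eq_busemann_add hg hz]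
  ring

end Ray

theorem isRay_piecewise {c g : ℝ → X} {L a : ℝ} (hL : 0 ≤ L) (ha : 0 ≤ a)
    (hc : ∀ s ∈ Icc 0 L, ∀ t ∈ Icc 0 L, dist (c s) (c t) = |s - t|) (hcL : c L = g a)
    (hg : IsRay g) (hfar : ∀ t, a ≤ t → dist (c 0) (g t) = L + (t - a)) :
    IsRay fun t => if t ≤ L then c t else g (t - L + a) := by
  suffices h : ∀ s t, 0 ≤ s → s ≤ t → dist (if s ≤ L then c s else g (s - L + a))
      (if t ≤ L then c t else g (t - L + a)) = t - s by
    intro s t hs ht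
    rcases le_total s t with hst | hst
    · rw [h s t hs hst, abs_of_nonpos (by linarith), neg_sub]
    · rw [dist_comm, h t s ht hst, abs_of_nonneg (by linarith)]
  intro s t hs hst
  by_cases htL : t ≤ L
  · rw [if_pos htL, if_pos (hst.trans htL), hc s ⟨hs, hst.trans htL⟩ t ⟨hs.trans hst, htL⟩,
      abs_of_nonpos (by linarith), neg_sub]
  by_cases hsL : s ≤ L
  · rw [if_neg htL, if_pos hsL]
    have hsc := hc 0 ⟨le_rfl, hL⟩ s ⟨hs, hsL⟩
    have hcs := hc s ⟨hs, hsL⟩ L ⟨hL, le_rfl⟩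
    have hgt := hg a (t - L + a) ha (by linarith)
    rw [zero_sub, abs_neg, abs_of_nonneg hs] at hsc
    rw [abs_of_nonpos (by linarith)] at hcs
    rw [abs_of_nonpos (by linarith)] at hgt
    have hupper := dist_triangle (c s) (c L) (g (t - L + a))
    have hlower := dist_triangle (c 0) (c s) (g (t - L + a))
    rw [hcL] at hupper hcs
    rw [hfar _ (by linarith)] at hlower
    linarith
  · rw [if_neg htL, if_neg hsL, hg _ _ (by linarith) (by linarith), abs_of_nonpos (by linarith)]
    ring

theorem IsZeroHyperbolic.exists_ray_asymptotic (htree : IsZeroHyperbolic X)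
    (hgeo : IsGeodesicSpace X) (x : X) (δ : GeodesicRay X) :
    ∃ β : GeodesicRay X, β.1 0 = x ∧ Asymptotic β δ := by
  obtain ⟨c, hc0, hcL, hc⟩ := hgeo x (δ.1 (dist x (δ.1 0)))
  have hL := htree.dist_ray_eq_busemann_add δ.2 (le_refl (dist x (δ.1 0)))
  set r := dist x (δ.1 0)
  set L := dist x (δ.1 r)
  have hr : 0 ≤ r := dist_nonneg
  have hfar : ∀ t, r ≤ t → dist (c 0) (δ.1 t) = L + (t - r) := fun t ht => by
    rw [hc0, htree.dist_ray_eq_busemann_add δ.2 ht, hL]; ring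
  refine ⟨⟨_, isRay_piecewise dist_nonneg dist_nonneg hc hcL δ.2 hfar⟩, by simp [hc0],
    max (2 * L + r) |r - L|, fun t ht => ?_⟩
  dsimp only
  split_ifs with htL
  · have h1 := hc t ⟨ht, htL⟩ 0 ⟨le_rfl, dist_nonneg⟩
    have h2 := δ.2 0 t le_rfl ht
    rw [sub_zero, abs_of_nonneg ht] at h1
    rw [zero_sub, abs_neg, abs_of_nonneg ht] at h2
    refine le_max_of_le_left ?_
    calc dist (c t) (δ.1 t) ≤ dist (c t) (c 0) + dist (c 0) (δ.1 0) + dist (δ.1 0) (δ.1 t) :=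
          dist_triangle4 _ _ _ _
      _ ≤ 2 * L + r := by rw [h1, hc0, h2]; linarith
  · rw [δ.2 _ _ (by linarith) ht, show t - L + r - t = r - L by ring]
    exact le_max_right _ _

theorem boundaryMk_eq_iff {β δ : GeodesicRay X} :
    boundaryMk β = boundaryMk δ ↔ Asymptotic β δ :=
  ⟨fun h => Quotient.exact h, fun h => Quotient.sound h⟩

theorem boundaryMk_surjective : Function.Surjective (boundaryMk : GeodesicRay X → Boundary X) :=
  Quotient.mk_surjective

theorem IsZeroHyperbolic.busemann_sub_busemann_of_asymptotic (htree : IsZeroHyperbolic X)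
    {β δ : GeodesicRay X} (h : Asymptotic β δ) (p q : X) :
    busemann β.1 p - busemann β.1 q = busemann δ.1 p - busemann δ.1 q := by
  obtain ⟨C, hC⟩ := h
  suffices key : ∀ p q, busemann β.1 p + busemann δ.1 q ≤ busemann δ.1 p + busemann β.1 q by
    linarith [key p q, key q p]
  intro p q
  obtain ⟨T, hTp, hTq, hTC⟩ := ((Filter.eventually_ge_atTop (dist p (β.1 0))).and
    ((Filter.eventually_ge_atTop (dist q (β.1 0))).and (Filter.eventually_gt_atTop
      ((dist p q + C - busemann β.1 p - busemann δ.1 q) / 2)))).exists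
  have hT0 : 0 ≤ T := dist_nonneg.trans hTp
  set S := max T (max (dist p (δ.1 0)) (dist q (δ.1 0)))
  have hTS : T ≤ S := le_max_left _ _
  have hfar : dist (β.1 T) (δ.1 S) ≤ C + (S - T) := by
    have := dist_triangle (β.1 T) (δ.1 T) (δ.1 S)
    rw [δ.2 T S hT0 (hT0.trans hTS), abs_of_nonpos (by linarith)] at this
    linarith [hC T hT0]
  have h := htree p (β.1 T) q (δ.1 S)
  rw [htree.dist_ray_eq_busemann_add β.2 hTp,
    htree.dist_ray_eq_busemann_add δ.2 (le_max_of_le_right (le_max_right _ _)),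
    htree.dist_ray_eq_busemann_add δ.2 (le_max_of_le_right (le_max_left _ _)), dist_comm (β.1 T) q,
    htree.dist_ray_eq_busemann_add β.2 hTq] at h
  rcases le_max_iff.1 h with h | h <;> linarith

theorem IsZeroHyperbolic.continuous_busemann (htree : IsZeroHyperbolic X) (p : X) :
    Continuous fun δ : GeodesicRay X => busemann δ.1 p := by
  have heval : ∀ t, Continuous fun δ : GeodesicRay X => δ.1 t :=
    fun t => (continuous_apply t).comp continuous_subtype_val
  refine continuous_iff_continuousAt.2 fun δ₀ => ?_
  set n := dist p (δ₀.1 0) + 1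
  have hU : IsOpen {δ : GeodesicRay X | dist p (δ.1 0) < n} :=
    isOpen_lt (continuous_const.dist (heval 0)) continuous_const
  have hcont : Continuous fun δ : GeodesicRay X => dist p (δ.1 n) - n :=
    (continuous_const.dist (heval n)).sub continuous_const
  refine hcont.continuousAt.congr
    (Filter.eventuallyEq_of_mem (hU.mem_nhds (show dist p (δ₀.1 0) < n from lt_add_one _))
      fun δ hδ => ?_)
  simp only [htree.dist_ray_eq_busemann_add δ.2 (le_of_lt hδ), add_sub_cancel_right]

theorem isQuotientMap_boundaryMk :
    Topology.IsQuotientMap (boundaryMk : GeodesicRay X → Boundary X) :=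
  isQuotientMap_quot_mk

theorem IsZeroHyperbolic.boundaryMk_mem_future_iff (htree : IsZeroHyperbolic X)
    (hgeo : IsGeodesicSpace X) (x y : X) (δ : GeodesicRay X) :
    boundaryMk δ ∈ future x y ↔ busemann δ.1 y = busemann δ.1 x - dist x y := by
  have hx : ∀ β : GeodesicRay X, β.1 0 = x → busemann β.1 x = 0 := fun β hβ => by
    simpa [hβ] using β.2.busemann_apply_self le_rfl
  constructor
  · rintro ⟨β, hβ0, hβδ, hβy⟩
    have hy := β.2.busemann_apply_self (dist_nonneg (x := x) (y := y))
    rw [hβy] at hy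
    linarith [htree.busemann_sub_busemann_of_asymptotic (boundaryMk_eq_iff.1 hβδ) y x, hx β hβ0]
  · intro h
    obtain ⟨β, hβ0, hβδ⟩ := htree.exists_ray_asymptotic hgeo x δ
    refine ⟨β, hβ0, boundaryMk_eq_iff.2 hβδ, dist_eq_zero.1 ?_⟩
    have hy : busemann β.1 y = -dist x y := by
      linarith [htree.busemann_sub_busemann_of_asymptotic hβδ y x, hx β hβ0]
    rw [dist_comm, htree.dist_ray_eq_max β.2 y dist_nonneg, hβ0, hy, dist_comm, sub_self,
      neg_add_cancel, max_self]

theorem IsZeroHyperbolic.isClosed_future (htree : IsZeroHyperbolic X) (hgeo : IsGeodesicSpace X)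
    (x y : X) : IsClosed (future x y) := by
  rw [← isQuotientMap_boundaryMk.isClosed_preimage]
  have : boundaryMk ⁻¹' future x y = {δ | busemann δ.1 y = busemann δ.1 x - dist x y} :=
    ext (htree.boundaryMk_mem_future_iff hgeo x y)
  rw [this]
  exact isClosed_eq (htree.continuous_busemann y)
    ((htree.continuous_busemann x).sub continuous_const)

theorem IsZeroHyperbolic.boundaryMk_mem_dirBoundary_iff (htree : IsZeroHyperbolic X)
    (hgeo : IsGeodesicSpace X) {x z : X} (hz : z ≠ x) (δ : GeodesicRay X) :
    boundaryMk δ ∈ dirBoundary x (connectedComponentIn {x}ᶜ z) ↔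
      0 < dist x z + busemann δ.1 x - busemann δ.1 z := by
  have hfar : ∀ β : GeodesicRay X, β.1 0 = x → Asymptotic β δ → ∀ T, dist z x ≤ T →
      2 * gromovProduct x z (β.1 T) = dist x z + busemann δ.1 x - busemann δ.1 z := by
    intro β hβ0 hβδ T hT
    rw [htree.two_mul_gromovProduct_ray β.2 (by simpa [hβ0] using hT.trans' dist_nonneg)
      (by rwa [hβ0])]
    linarith [htree.busemann_sub_busemann_of_asymptotic hβδ x z]
  rw [htree.connectedComponentIn_compl_singleton hgeo hz]
  constructor
  · rintro ⟨β, hβ0, hβδ, hβz⟩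
    have : 0 < gromovProduct x z (β.1 (dist z x + 1)) := hβz _ (by positivity)
    linarith [hfar β hβ0 (boundaryMk_eq_iff.1 hβδ) (dist z x + 1) (by linarith)]
  · intro h
    obtain ⟨β, hβ0, hβδ⟩ := htree.exists_ray_asymptotic hgeo x δ
    refine ⟨β, hβ0, boundaryMk_eq_iff.2 hβδ, fun t ht => ?_⟩
    set T := max t (dist z x)
    have hTz : 0 < gromovProduct x z (β.1 T) := by
      linarith [hfar β hβ0 hβδ T (le_max_right _ _)]
    have hTt : gromovProduct x (β.1 T) (β.1 t) = t := by
      have hT : 0 ≤ T := ht.le.trans (le_max_left _ _)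
      rw [gromovProduct, ← hβ0, β.2 0 T le_rfl hT, β.2 0 t le_rfl ht.le,
        β.2 T t hT ht.le, zero_sub, zero_sub, abs_neg, abs_neg, abs_of_nonneg hT,
        abs_of_nonneg ht.le, abs_of_nonneg (by linarith [le_max_left t (dist z x)])]
      ring
    exact (lt_min hTz (by rwa [hTt])).trans_le (htree.min_le_gromovProduct x z (β.1 T) (β.1 t))

theorem IsZeroHyperbolic.isOpen_dirBoundary (htree : IsZeroHyperbolic X)
    (hgeo : IsGeodesicSpace X) {x : X} {C : Set X} (hC : C ∈ complComponents x) :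
    IsOpen (dirBoundary x C) := by
  obtain ⟨z, hz, rfl⟩ := hC
  rw [← isQuotientMap_boundaryMk.isOpen_preimage]
  have : boundaryMk ⁻¹' dirBoundary x (connectedComponentIn {x}ᶜ z) =
      {δ | 0 < dist x z + busemann δ.1 x - busemann δ.1 z} :=
    ext (htree.boundaryMk_mem_dirBoundary_iff hgeo hz)
  rw [this]
  exact isOpen_lt continuous_const
    ((continuous_const.add (htree.continuous_busemann x)).sub (htree.continuous_busemann z))

theorem IsZeroHyperbolic.disjoint_dirBoundary (htree : IsZeroHyperbolic X)
    (hgeo : IsGeodesicSpace X) {x : X} {C C' : Set X} (hC : C ∈ complComponents x)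
    (hC' : C' ∈ complComponents x) (hne : C ≠ C') :
    Disjoint (dirBoundary x C) (dirBoundary x C') := by
  obtain ⟨z, hz, rfl⟩ := hC
  obtain ⟨z', hz', rfl⟩ := hC'
  refine disjoint_left.2 fun ξ hξ hξ' => hne ?_
  obtain ⟨δ, rfl⟩ := boundaryMk_surjective ξ
  rw [htree.boundaryMk_mem_dirBoundary_iff hgeo hz] at hξ
  rw [htree.boundaryMk_mem_dirBoundary_iff hgeo hz'] at hξ'
  set T := max (dist x (δ.1 0)) (max (dist z (δ.1 0)) (dist z' (δ.1 0)))
  have h := htree.two_mul_gromovProduct_ray δ.2 (le_max_left _ _)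
    (le_max_of_le_right (le_max_left _ _) : dist z (δ.1 0) ≤ T)
  have h' := htree.two_mul_gromovProduct_ray δ.2 (le_max_left _ _)
    (le_max_of_le_right (le_max_right _ _) : dist z' (δ.1 0) ≤ T)
  rw [gromovProduct_comm] at h'
  have hzz' : 0 < gromovProduct x z z' :=
    (lt_min (by linarith) (by linarith)).trans_le (htree.min_le_gromovProduct x z (δ.1 T) z')
  rw [connectedComponentIn_eq (show z' ∈ connectedComponentIn {x}ᶜ z by
    rwa [htree.connectedComponentIn_compl_singleton hgeo hz])]

namespace GeodesicLine

abbrev busemannTop (γ : GeodesicLine X) : X → ℝ := busemann (posRay γ).1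

abbrev busemannBot (γ : GeodesicLine X) : X → ℝ := busemann (negRay γ).1

theorem dist_apply (γ : GeodesicLine X) (s t : ℝ) : dist (γ.1 s) (γ.1 t) = |s - t| := by
  rw [γ.2.dist_eq, Real.dist_eq]

theorem busemannTop_apply (γ : GeodesicLine X) (s : ℝ) :
    γ.busemannTop (γ.1 s) = -s := by
  simp only [busemannTop, busemann, posRay, dist_apply, sub_zero]
  rcases le_total 0 s with hs | hs
  · simp [abs_of_nonneg hs]
  · rw [abs_of_nonpos hs, abs_of_nonpos (by linarith)]; ring

theorem busemannBot_apply (γ : GeodesicLine X) (s : ℝ) :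
    γ.busemannBot (γ.1 s) = s := by
  simp only [busemannBot, busemann, negRay, dist_apply, neg_zero, sub_zero]
  rcases le_total 0 s with hs | hs
  · rw [abs_of_nonneg hs, abs_of_nonneg (by linarith)]; ring
  · simp [abs_of_nonpos hs]

def reverse (γ : GeodesicLine X) : GeodesicLine X :=
  ⟨fun t => γ.1 (-t), γ.2.comp isometry_neg⟩

theorem endTop_reverse (γ : GeodesicLine X) : endTop γ.reverse = endBot γ := rfl

theorem endBot_reverse (γ : GeodesicLine X) : endBot γ.reverse = endTop γ := by
  simp only [endBot, endTop, negRay, posRay, reverse, neg_neg]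

theorem traverses_reverse (γ : GeodesicLine X) (x y : X) :
    Traverses γ.reverse x y ↔ Traverses γ y x := by
  simp only [Traverses, reverse, dist_comm y x]
  constructor
  · rintro ⟨t, hx, hy⟩
    exact ⟨-(t + dist x y), hy, by convert hx using 2; ring⟩
  · rintro ⟨t, hy, hx⟩
    exact ⟨-(t + dist x y), by rwa [neg_neg], by convert hy using 2; ring⟩

theorem busemann_of_traverses {γ : GeodesicLine X} {x y : X} (h : Traverses γ x y) :
    γ.busemannTop y = γ.busemannTop x - dist x y ∧
      γ.busemannBot y = γ.busemannBot x + dist x y := by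
  obtain ⟨t, hx, hy⟩ := h
  generalize dist x y = d at hy ⊢
  subst hx hy
  rw [busemannTop_apply, busemannTop_apply, busemannBot_apply,
    busemannBot_apply]
  exact ⟨by ring, rfl⟩

end GeodesicLine

theorem IsZeroHyperbolic.dist_apply_eq_busemannTop_add (htree : IsZeroHyperbolic X)
    (γ : GeodesicLine X) {p : X} {T : ℝ} (hT : dist p (γ.1 0) ≤ T) :
    dist p (γ.1 T) = γ.busemannTop p + T :=
  htree.dist_ray_eq_busemann_add (posRay γ).2 hT

theorem IsZeroHyperbolic.dist_apply_neg_eq_busemannBot_add (htree : IsZeroHyperbolic X)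
    (γ : GeodesicLine X) {p : X} {T : ℝ} (hT : dist p (γ.1 0) ≤ T) :
    dist p (γ.1 (-T)) = γ.busemannBot p + T :=
  htree.dist_ray_eq_busemann_add (negRay γ).2 (by simpa [negRay] using hT)

theorem IsZeroHyperbolic.dist_line_eq (htree : IsZeroHyperbolic X) (γ : GeodesicLine X)
    (p : X) (t : ℝ) :
    dist p (γ.1 t) = (γ.busemannBot p + γ.busemannTop p) / 2 +
      |t - (γ.busemannBot p - γ.busemannTop p) / 2| := by
  set A := γ.busemannBot p
  set B := γ.busemannTop p
  set T := |t| + dist p (γ.1 0)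
  have hT : dist p (γ.1 0) ≤ T := le_add_of_nonneg_left (abs_nonneg t)
  have htT : |t| ≤ T := le_add_of_nonneg_right dist_nonneg
  have hB := htree.dist_apply_eq_busemannTop_add γ hT
  have hA := htree.dist_apply_neg_eq_busemannBot_add γ hT
  have h := htree p (γ.1 t) (γ.1 (-T)) (γ.1 T)
  have h1 := dist_triangle p (γ.1 t) (γ.1 T)
  have h2 := dist_triangle p (γ.1 t) (γ.1 (-T))
  simp only [γ.dist_apply] at h h1 h2
  rw [hA, hB, abs_of_nonpos (by linarith [neg_abs_le t]),
    abs_of_nonpos (by linarith [le_abs_self t]), abs_of_nonneg (by linarith [neg_abs_le t])] at h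
  rw [hB, abs_of_nonpos (by linarith [le_abs_self t])] at h1
  rw [hA, abs_of_nonneg (by linarith [neg_abs_le t])] at h2
  have hmax : max (A - t) (B + t) = (A + B) / 2 + |t - (A - B) / 2| := by
    rcases le_total 0 (t - (A - B) / 2) with h0 | h0
    · rw [abs_of_nonneg h0, max_eq_right (by linarith)]; ring
    · rw [abs_of_nonpos h0, max_eq_left (by linarith)]; ring
  rw [← hmax]
  refine le_antisymm ?_ (max_le (by linarith) (by linarith))
  rcases le_max_iff.1 h with h | h
  · exact le_max_of_le_left (by linarith)
  · exact le_max_of_le_right (by linarith)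

theorem IsZeroHyperbolic.busemannBot_add_busemannTop_nonneg (htree : IsZeroHyperbolic X)
    (γ : GeodesicLine X) (p : X) : 0 ≤ γ.busemannBot p + γ.busemannTop p := by
  have := htree.dist_line_eq γ p ((γ.busemannBot p - γ.busemannTop p) / 2)
  rw [sub_self, abs_zero, add_zero] at this
  linarith [this ▸ dist_nonneg]

theorem IsZeroHyperbolic.exists_apply_eq_iff (htree : IsZeroHyperbolic X) (γ : GeodesicLine X)
    (p : X) : (∃ t, γ.1 t = p) ↔ γ.busemannBot p + γ.busemannTop p = 0 := by
  constructor
  · rintro ⟨t, rfl⟩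
    rw [γ.busemannBot_apply, γ.busemannTop_apply, add_neg_cancel]
  · intro h
    refine ⟨(γ.busemannBot p - γ.busemannTop p) / 2, ?_⟩
    rw [← dist_eq_zero, dist_comm, htree.dist_line_eq, h, sub_self, abs_zero, zero_div, add_zero]

theorem IsZeroHyperbolic.isVertex_foot (htree : IsZeroHyperbolic X) (hgeo : IsGeodesicSpace X)
    (γ : GeodesicLine X) {p : X}
    (hp : 0 < γ.busemannBot p + γ.busemannTop p) :
    IsVertex (γ.1 ((γ.busemannBot p - γ.busemannTop p) / 2)) := by
  set t₀ := (γ.busemannBot p - γ.busemannTop p) / 2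
  have hd : ∀ s, dist p (γ.1 (t₀ + s)) = dist p (γ.1 t₀) + |s| := fun s => by
    rw [htree.dist_line_eq, htree.dist_line_eq, add_sub_cancel_left, sub_self, abs_zero, add_zero]
  have hd0 : dist p (γ.1 t₀) ≠ 0 := by
    rw [htree.dist_line_eq, sub_self, abs_zero, add_zero]; positivity
  have hne : ∀ {s}, s ≠ 0 → γ.1 (t₀ + s) ≠ γ.1 t₀ := fun {s} hs h => by
    have := γ.dist_apply (t₀ + s) t₀
    rw [h, dist_self, add_sub_cancel_left] at this
    exact hs (abs_eq_zero.1 this.symm)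
  refine htree.isVertex_of_between hgeo (u := p) (v := γ.1 (t₀ + 1)) (w := γ.1 (t₀ + -1))
    (fun h => hd0 (by rw [h, dist_self])) (hne one_ne_zero) (hne (by norm_num)) ?_ ?_ ?_
  · rw [hd, γ.dist_apply]; norm_num
  · rw [hd, γ.dist_apply]; norm_num
  · rw [γ.dist_apply, γ.dist_apply, γ.dist_apply]; norm_num

theorem IsZeroHyperbolic.busemannTop_add_busemannBot_le (htree : IsZeroHyperbolic X)
    (γ : GeodesicLine X) (p q : X) :
    γ.busemannTop p + γ.busemannBot q ≤
      max (dist p q) (γ.busemannBot p + γ.busemannTop q) := by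
  set T := max (dist p (γ.1 0)) (dist q (γ.1 0))
  have hT0 : 0 ≤ T := dist_nonneg.trans (le_max_left _ _)
  have h := htree p (γ.1 T) q (γ.1 (-T))
  rw [dist_comm (γ.1 T) q, γ.dist_apply, abs_of_nonneg (by linarith),
    htree.dist_apply_eq_busemannTop_add γ (le_max_left _ _),
    htree.dist_apply_eq_busemannTop_add γ (le_max_right _ _),
    htree.dist_apply_neg_eq_busemannBot_add γ (le_max_left _ _),
    htree.dist_apply_neg_eq_busemannBot_add γ (le_max_right _ _)] at h
  rcases le_max_iff.1 h with h | h
  · exact le_max_of_le_left (by linarith)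
  · exact le_max_of_le_right (by linarith)

theorem IsZeroHyperbolic.traverses_of_busemann (htree : IsZeroHyperbolic X)
    (hgeo : IsGeodesicSpace X) {γ : GeodesicLine X} {x y : X} (hedge : IsOrientedEdge x y)
    (hB : γ.busemannTop y = γ.busemannTop x - dist x y)
    (hA : γ.busemannBot y ≠ γ.busemannBot x - dist x y) : Traverses γ x y := by
  have hlip : γ.busemannBot x - γ.busemannBot y ≤ dist x y :=
    htree.busemann_sub_le (negRay γ).2 x y
  have hAy : γ.busemannBot y = dist x y - γ.busemannTop x := by
    have hy := htree.busemannBot_add_busemannTop_nonneg γ y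
    rcases le_max_iff.1 (htree.busemannTop_add_busemannBot_le γ x y) with h | h
    · linarith
    · exact absurd (by linarith) hA
  obtain ⟨s, hs⟩ := (htree.exists_apply_eq_iff γ y).2 (by linarith)
  have hsy := γ.busemannBot_apply s
  rw [hs] at hsy
  rcases (htree.busemannBot_add_busemannTop_nonneg γ x).eq_or_lt with hx | hx
  · obtain ⟨r, hr⟩ := (htree.exists_apply_eq_iff γ x).2 hx.symm
    have hrx := γ.busemannBot_apply r
    rw [hr] at hrx
    exact ⟨r, hr, by rw [show r + dist x y = s by linarith, hs]⟩
  -- otherwise the foot `γ.1 t₀` of `x` on `γ` is a vertex strictly between `x` and `y`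
  exfalso
  have hρ : (γ.busemannBot x + γ.busemannTop x) / 2 < dist x y :=
    lt_of_le_of_ne (by linarith) fun h => hA (by linarith)
  set t₀ := (γ.busemannBot x - γ.busemannTop x) / 2 with ht₀
  have hxq : dist x (γ.1 t₀) = (γ.busemannBot x + γ.busemannTop x) / 2 := by
    rw [htree.dist_line_eq, sub_self, abs_zero, add_zero]
  have hqy : dist (γ.1 t₀) y = dist x y - dist x (γ.1 t₀) := by
    rw [← hs, γ.dist_apply, abs_of_nonpos (by linarith), hxq, hs]
    linarith
  rcases hedge.2.2.2 (γ.1 t₀) (by rw [hqy]; ring) with h | h | h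
  · have h0 : dist x (γ.1 t₀) = 0 := by rw [h, dist_self]
    linarith
  · have h0 : dist (γ.1 t₀) y = 0 := by rw [h, dist_self]
    linarith
  · exact h (htree.isVertex_foot hgeo γ hx)

theorem IsZeroHyperbolic.traverses_iff (htree : IsZeroHyperbolic X) (hgeo : IsGeodesicSpace X)
    {x y : X} (hedge : IsOrientedEdge x y) (γ : GeodesicLine X) :
    Traverses γ x y ↔ endTop γ ∈ future x y ∧ endBot γ ∉ future x y := by
  rw [endTop, endBot, htree.boundaryMk_mem_future_iff hgeo, htree.boundaryMk_mem_future_iff hgeo]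
  refine ⟨fun h => ?_, fun h => htree.traverses_of_busemann hgeo hedge h.1 h.2⟩
  obtain ⟨hB, hA⟩ := γ.busemann_of_traverses h
  exact ⟨hB, fun h => by linarith [dist_pos.2 hedge.1]⟩

theorem IsZeroHyperbolic.exists_apply_eq_of_endTop_mem_of_endBot_notMem
    (htree : IsZeroHyperbolic X) (hgeo : IsGeodesicSpace X) {x : X} {C : Set X}
    (hC : C ∈ complComponents x) {γ : GeodesicLine X} (hT : endTop γ ∈ dirBoundary x C)
    (hB : endBot γ ∉ dirBoundary x C) : ∃ t, γ.1 t = x := by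
  by_contra hx
  rw [htree.exists_apply_eq_iff] at hx
  have hpos := (htree.busemannBot_add_busemannTop_nonneg γ x).lt_of_ne' hx
  -- both ends of `γ` lie in the direction at `x` of the foot `γ.1 t₀` of `x` on `γ`
  set t₀ := (γ.busemannBot x - γ.busemannTop x) / 2 with ht₀
  have hxq : dist x (γ.1 t₀) = (γ.busemannBot x + γ.busemannTop x) / 2 := by
    rw [htree.dist_line_eq, sub_self, abs_zero, add_zero]
  have hqx : γ.1 t₀ ≠ x := fun h => by
    rw [h, dist_self] at hxq
    linarith
  have hCq : connectedComponentIn {x}ᶜ (γ.1 t₀) ∈ complComponents x := ⟨_, hqx, rfl⟩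
  have hTq : endTop γ ∈ dirBoundary x (connectedComponentIn {x}ᶜ (γ.1 t₀)) := by
    rw [endTop, htree.boundaryMk_mem_dirBoundary_iff hgeo hqx, hxq]
    change 0 < _ + γ.busemannTop x - γ.busemannTop (γ.1 t₀)
    linarith [γ.busemannTop_apply t₀]
  have hBq : endBot γ ∈ dirBoundary x (connectedComponentIn {x}ᶜ (γ.1 t₀)) := by
    rw [endBot, htree.boundaryMk_mem_dirBoundary_iff hgeo hqx, hxq]
    change 0 < _ + γ.busemannBot x - γ.busemannBot (γ.1 t₀)
    linarith [γ.busemannBot_apply t₀]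
  obtain rfl : C = connectedComponentIn {x}ᶜ (γ.1 t₀) := by
    by_contra hne
    exact disjoint_left.1 (htree.disjoint_dirBoundary hgeo hC hCq hne) hT hTq
  exact hB hBq

theorem measureReal_sub_measureReal {α : Type*} [MeasurableSpace α] (μ : Measure α)
    [IsFiniteMeasure μ] {s t : Set α} (hs : MeasurableSet s) (ht : MeasurableSet t) :
    μ.real s - μ.real t = μ.real (s \ t) - μ.real (t \ s) := by
  rw [← measureReal_sdiff_add_inter (s := s) ht, ← measureReal_sdiff_add_inter (s := t) hs,
    inter_comm]
  ring

theorem continuous_endTop : Continuous (endTop : GeodesicLine X → Boundary X) :=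
  isQuotientMap_boundaryMk.continuous.comp <| continuous_induced_rng.2 <|
    continuous_pi fun t => (continuous_apply t).comp continuous_subtype_val

theorem continuous_endBot : Continuous (endBot : GeodesicLine X → Boundary X) :=
  isQuotientMap_boundaryMk.continuous.comp <| continuous_induced_rng.2 <|
    continuous_pi fun t => (continuous_apply (-t)).comp continuous_subtype_val

theorem signedFlow_map (μ : Measure (GeodesicLine X)) [IsFiniteMeasure μ] {A : Set (Boundary X)}
    (hA : MeasurableSet A) :
    signedFlow (μ.map endBot) (μ.map endTop) A =
      μ.real (endTop ⁻¹' A) - μ.real (endBot ⁻¹' A) := by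
  rw [signedFlow, ← measureReal_def, ← measureReal_def,
    map_measureReal_apply continuous_endTop.measurable hA,
    map_measureReal_apply continuous_endBot.measurable hA]

theorem IsZeroHyperbolic.edgeFlow_map (htree : IsZeroHyperbolic X) (hgeo : IsGeodesicSpace X)
    (μ : Measure (GeodesicLine X)) [IsFiniteMeasure μ] {x y : X} (hedge : IsOrientedEdge x y) :
    edgeFlow (μ.map endBot) (μ.map endTop) x y =
      μ.real {γ | Traverses γ x y} - μ.real {γ | Traverses γ y x} := by
  have hF := (htree.isClosed_future hgeo x y).measurableSet
  have hxy : {γ | Traverses γ x y} = endTop ⁻¹' future x y \ endBot ⁻¹' future x y :=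
    ext (htree.traverses_iff hgeo hedge)
  have hyx : {γ | Traverses γ y x} = endBot ⁻¹' future x y \ endTop ⁻¹' future x y :=
    ext fun γ => by
      rw [mem_ofPred_eq, ← γ.traverses_reverse, htree.traverses_iff hgeo hedge,
        γ.endTop_reverse, γ.endBot_reverse]
      rfl
  rw [edgeFlow, signedFlow_map μ hF, hxy, hyx]
  exact measureReal_sub_measureReal μ (continuous_endTop.measurable hF)
    (continuous_endBot.measurable hF)

theorem IsZeroHyperbolic.vertexFlow_map_le (htree : IsZeroHyperbolic X) (hgeo : IsGeodesicSpace X)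
    (μ : Measure (GeodesicLine X)) [IsFiniteMeasure μ] (x : X) :
    vertexFlow (μ.map endBot) (μ.map endTop) x ≤ μ.real {γ | ∃ t, γ.1 t = x} := by
  have hD : ∀ C : complComponents x, MeasurableSet (dirBoundary x C.1) :=
    fun C => (htree.isOpen_dirBoundary hgeo C.2).measurableSet
  set N : complComponents x → Set (GeodesicLine X) :=
    fun C => endTop ⁻¹' dirBoundary x C.1 \ endBot ⁻¹' dirBoundary x C.1
  have hN : (univ : Set (complComponents x)).PairwiseDisjoint N := fun C _ C' _ hne =>
    ((htree.disjoint_dirBoundary hgeo C.2 C'.2 (Subtype.coe_injective.ne hne)).preimage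
      endTop).mono sdiff_subset sdiff_subset
  refine Real.tsum_le_of_sum_le (fun C => le_max_right _ _) fun s => ?_
  calc ∑ C ∈ s, max (signedFlow (μ.map endBot) (μ.map endTop) (dirBoundary x C.1)) 0
      ≤ ∑ C ∈ s, μ.real (N C) := Finset.sum_le_sum fun C _ =>
        max_le (by rw [signedFlow_map μ (hD C)]; exact le_measureReal_sdiff) measureReal_nonneg
    _ = μ.real (⋃ C ∈ s, N C) := (measureReal_biUnion_finset (hN.subset (subset_univ _))
        fun C _ => (continuous_endTop.measurable (hD C)).diff
          (continuous_endBot.measurable (hD C))).symm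
    _ ≤ μ.real {γ | ∃ t, γ.1 t = x} := measureReal_mono <| iUnion₂_subset fun C _ γ hγ =>
        htree.exists_apply_eq_of_endTop_mem_of_endBot_notMem hgeo C.2 hγ.1 hγ.2

end

open MeasureTheory in
theorem edge_flow_eq_meas_difference_and_vertex_bound_general {X : Type*} [MetricSpace X]
    (hgeo : IsGeodesicSpace X) (htree : IsZeroHyperbolic X)
    (νneg νpos : MeasureTheory.Measure (Boundary X))
    (μ : Measure (GeodesicLine X)) [IsProbabilityMeasure μ]
    (hends₁ : μ.map endBot = νneg) (hends₂ : μ.map endTop = νpos) :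
    (∀ x y : X, IsOrientedEdge x y →
        edgeFlow νneg νpos x y
          = (μ {γ | Traverses γ x y}).toReal - (μ {γ | Traverses γ y x}).toReal) ∧
    ∀ x : X, IsVertex x →
      vertexFlow νneg νpos x ≤ (μ {γ | ∃ t : ℝ, γ.1 t = x}).toReal := by
  subst hends₁ hends₂
  exact ⟨fun x y hedge => htree.edgeFlow_map hgeo μ hedge,
    fun x _ => htree.vertexFlow_map_le hgeo μ x⟩

open MeasureTheory in
/-- If `μ` is a probability measure on geodesic lines with ends
`ν₋, ν₊`, then `φ(xy) = μ(xy) - μ(yx)` for every oriented edge `(x,y)`, and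
`μ(x) ≥ φ(x)` for every vertex `x`. -/
theorem edge_flow_eq_meas_difference_and_vertex_bound {X : Type*} [MetricSpace X] [CompleteSpace X] [LocallyCompactSpace X]
    [MeasurableSpace X] [BorelSpace X]
    (hgeo : IsGeodesicSpace X) (htree : IsZeroHyperbolic X) (x₀ : X)
    (νneg νpos : MeasureTheory.Measure (Boundary X))
    [MeasureTheory.IsProbabilityMeasure νneg] [MeasureTheory.IsProbabilityMeasure νpos]
    (hant : AntipodalMeasures νneg νpos)
    (μ : Measure (GeodesicLine X)) [IsProbabilityMeasure μ]
    (hends₁ : μ.map endBot = νneg) (hends₂ : μ.map endTop = νpos) :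
    (∀ x y : X, IsOrientedEdge x y →
        edgeFlow νneg νpos x y
          = (μ {γ | Traverses γ x y}).toReal - (μ {γ | Traverses γ y x}).toReal) ∧
    ∀ x : X, IsVertex x →
      vertexFlow νneg νpos x ≤ (μ {γ | ∃ t : ℝ, γ.1 t = x}).toReal :=
  edge_flow_eq_meas_difference_and_vertex_bound_general hgeo htree νneg νpos μ hends₁ hends₂
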